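/- arXiv:1511.04761 — 2 statements merged into one kernel-verified Lean document; each statement's English description precedes it below -/
import Mathlib

section
/- Let X be a metric space, let Θ be a totally ordered set, and let (H_θ)_{θ∈Θ} be a family of non-empty bounded subsets of X, each hyperconvex with the induced metric, which is decreasing in the sense that θ ≤ θ' implies H_{θ'} ⊆ H_θ. Then the intersection ⋂_{θ∈Θ} H_θ is hyperconvex (in particular non-empty). -/
universe u v

/-- A metric space `X` is hyperconvex if it is non-empty and every family of closed balls
`B(x γ, r γ)` with `dist (x β) (x γ) ≤ r β + r γ` for all indices has non-empty
intersection. -/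
def Hyperconvex (X : Type u) [MetricSpace X] : Prop :=
  Nonempty X ∧
    ∀ {Γ : Type u} (x : Γ → X) (r : Γ → ℝ),
      (∀ β γ, dist (x β) (x γ) ≤ r β + r γ) →
      (⋂ γ, Metric.closedBall (x γ) (r γ)).Nonempty

namespace BaillonAux

open Metric Set Bornology

variable {X : Type u} [MetricSpace X]

/-- The subset of `H` cut out by a family of closed-ball constraints. -/
def ballSet (H : Set X) (A : Set (X × ℝ)) : Set X :=
  H ∩ ⋂ p ∈ A, Metric.closedBall p.1 p.2

lemma mem_ballSet {H : Set X} {A : Set (X × ℝ)} {y : X} :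
    y ∈ ballSet H A ↔ y ∈ H ∧ ∀ p ∈ A, dist y p.1 ≤ p.2 := by
  simp [ballSet, Metric.mem_closedBall]

lemma ballSet_nonempty {H : Set X} (hH : Hyperconvex ↥H) {A : Set (X × ℝ)}
    (hc : ∀ p ∈ A, p.1 ∈ H)
    (hpair : ∀ p ∈ A, ∀ q ∈ A, dist p.1 q.1 ≤ p.2 + q.2) :
    (ballSet H A).Nonempty := by
  obtain ⟨y, hy⟩ := hH.2 (Γ := ↥A) (fun p => ⟨p.1.1, hc p.1 p.2⟩) (fun p => p.1.2)
    (fun p q => by simpa [Subtype.dist_eq] using hpair p.1 p.2 q.1 q.2)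
  rw [Set.mem_iInter] at hy
  refine ⟨y.1, mem_ballSet.2 ⟨y.2, fun p hp => ?_⟩⟩
  have h := hy ⟨p, hp⟩
  rw [Metric.mem_closedBall, Subtype.dist_eq] at h
  exact h

variable {Θ : Type v} [LinearOrder Θ]

/-- The master lemma: the intersection of the decreasing family, further intersected with
a compatible family of closed balls centered in the intersection, is non-empty. -/
lemma master [Nonempty Θ] (H : Θ → Set X)
    (hbdd : ∀ θ, IsBounded (H θ))
    (hhc : ∀ θ, Hyperconvex ↥(H θ))
    (hdec : ∀ θ θ', θ ≤ θ' → H θ' ⊆ H θ)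
    {Γ : Type u} (x : Γ → X) (r : Γ → ℝ)
    (hx : ∀ γ θ, x γ ∈ H θ)
    (hr : ∀ β γ, dist (x β) (x γ) ≤ r β + r γ) :
    ∃ p, (∀ θ, p ∈ H θ) ∧ ∀ γ, dist p (x γ) ≤ r γ := by
  classical
  set base : Θ → Set (X × ℝ) := fun _ => Set.range (fun γ => (x γ, r γ)) with hbase
  set S : Set (Θ → Set (X × ℝ)) :=
    { A | (∀ θ, ∀ p ∈ A θ, p.1 ∈ H θ) ∧
          (∀ θ, (ballSet (H θ) (A θ)).Nonempty) ∧
          (∀ θ θ', θ ≤ θ' → ballSet (H θ') (A θ') ⊆ ballSet (H θ) (A θ)) ∧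
          (∀ θ, base θ ⊆ A θ) } with hS
  -- the base system belongs to `S`
  have hbaseS : base ∈ S := by
    refine ⟨?_, ?_, ?_, fun θ => subset_rfl⟩
    · rintro θ p ⟨γ, rfl⟩
      exact hx γ θ
    · intro θ
      refine ballSet_nonempty (hhc θ) ?_ ?_
      · rintro p ⟨γ, rfl⟩; exact hx γ θ
      · rintro p ⟨β, rfl⟩ q ⟨γ, rfl⟩; exact hr β γ
    · intro θ θ' h y hy
      rw [mem_ballSet] at hy ⊢
      exact ⟨hdec θ θ' h hy.1, hy.2⟩
  -- Zorn's lemma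
  have hchainS : ∀ c ⊆ S, IsChain (· ≤ ·) c → ∀ y ∈ c, ∃ ub ∈ S, ∀ z ∈ c, z ≤ ub := by
    intro c hcS hchain A₀ hA₀
    refine ⟨fun θ => ⋃ A ∈ c, A θ, ⟨?_, ?_, ?_, ?_⟩, ?_⟩
    · rintro θ p hp
      simp only [Set.mem_iUnion] at hp
      obtain ⟨A, hA, hpA⟩ := hp
      exact (hcS hA).1 θ p hpA
    · intro θ
      refine ballSet_nonempty (hhc θ) ?_ ?_
      · rintro p hp
        simp only [Set.mem_iUnion] at hp
        obtain ⟨A, hA, hpA⟩ := hp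
        exact (hcS hA).1 θ p hpA
      · intro p hp q hq
        simp only [Set.mem_iUnion] at hp hq
        obtain ⟨A, hA, hpA⟩ := hp
        obtain ⟨B, hB, hqB⟩ := hq
        rcases hchain.total hA hB with hAB | hBA
        · obtain ⟨w, hw⟩ := (hcS hB).2.1 θ
          rw [mem_ballSet] at hw
          calc dist p.1 q.1 ≤ dist p.1 w + dist w q.1 := dist_triangle _ _ _
          _ ≤ p.2 + q.2 := by
              have h1 := hw.2 p (hAB θ hpA)
              have h2 := hw.2 q hqB
              rw [dist_comm] at h1
              linarith
        · obtain ⟨w, hw⟩ := (hcS hA).2.1 θ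
          rw [mem_ballSet] at hw
          calc dist p.1 q.1 ≤ dist p.1 w + dist w q.1 := dist_triangle _ _ _
          _ ≤ p.2 + q.2 := by
              have h1 := hw.2 p hpA
              have h2 := hw.2 q (hBA θ hqB)
              rw [dist_comm] at h1
              linarith
    · intro θ θ' h y hy
      rw [mem_ballSet] at hy ⊢
      refine ⟨hdec θ θ' h hy.1, ?_⟩
      rintro p hp
      simp only [Set.mem_iUnion] at hp
      obtain ⟨A, hA, hpA⟩ := hp
      have hyA : y ∈ ballSet (H θ') (A θ') := by
        rw [mem_ballSet]
        exact ⟨hy.1, fun q hq => hy.2 q (Set.mem_iUnion₂.2 ⟨A, hA, hq⟩)⟩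
      have := (hcS hA).2.2.1 θ θ' h hyA
      exact (mem_ballSet.1 this).2 p hpA
    · intro θ
      exact ((hcS hA₀).2.2.2 θ).trans (fun p hp => Set.mem_iUnion₂.2 ⟨A₀, hA₀, hp⟩)
    · intro A hA θ p hp
      exact Set.mem_iUnion₂.2 ⟨A, hA, hp⟩
  obtain ⟨M, -, hMmax⟩ := zorn_le_nonempty₀ S hchainS base hbaseS
  obtain ⟨hMc, hMne, hMdec, hMbase⟩ := hMmax.1
  set J : Θ → Set X := fun θ => ballSet (H θ) (M θ) with hJ
  have hJH : ∀ θ, J θ ⊆ H θ := fun θ y hy => (mem_ballSet.1 hy).1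
  -- Fact 1: any ball around a point of `H θ₀` containing `J θ₀` contains `J θ` for `θ ≤ θ₀`
  have fact1 : ∀ (θ₀ : Θ) (c : X) (ρ : ℝ), c ∈ H θ₀ → J θ₀ ⊆ Metric.closedBall c ρ →
      ∀ θ, θ ≤ θ₀ → J θ ⊆ Metric.closedBall c ρ := by
    intro θ₀ c ρ hcH hJball
    set A' : Θ → Set (X × ℝ) := fun θ =>
      M θ ∪ (if θ ≤ θ₀ then {(c, ρ)} else ∅) with hA'
    have hmemA' : ∀ θ p, p ∈ A' θ ↔ p ∈ M θ ∨ (θ ≤ θ₀ ∧ p = (c, ρ)) := by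
      intro θ p
      by_cases h : θ ≤ θ₀ <;> simp [hA', h, or_comm]
    have hMA' : M ≤ A' := fun θ p hp => (hmemA' θ p).2 (Or.inl hp)
    have hA'S : A' ∈ S := by
      refine ⟨?_, ?_, ?_, ?_⟩
      · intro θ p hp
        rcases (hmemA' θ p).1 hp with h | ⟨hθ, rfl⟩
        · exact hMc θ p h
        · exact hdec θ θ₀ hθ hcH
      · intro θ
        by_cases h : θ ≤ θ₀
        · obtain ⟨w, hw⟩ := hMne θ₀
          refine ⟨w, mem_ballSet.2 ⟨hJH θ (hMdec θ θ₀ h hw), ?_⟩⟩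
          intro p hp
          rcases (hmemA' θ p).1 hp with hpM | ⟨-, rfl⟩
          · exact (mem_ballSet.1 (hMdec θ θ₀ h hw)).2 p hpM
          · exact Metric.mem_closedBall.1 (hJball hw)
        · obtain ⟨w, hw⟩ := hMne θ
          refine ⟨w, mem_ballSet.2 ⟨hJH θ hw, ?_⟩⟩
          intro p hp
          rcases (hmemA' θ p).1 hp with hpM | ⟨hθ, -⟩
          · exact (mem_ballSet.1 hw).2 p hpM
          · exact absurd hθ h
      · intro θ θ' hθθ' y hy
        rw [mem_ballSet] at hy ⊢
        have hyJ : y ∈ J θ' := mem_ballSet.2 ⟨hy.1, fun q hq => hy.2 q (hMA' θ' hq)⟩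
        refine ⟨hdec θ θ' hθθ' hy.1, ?_⟩
        intro p hp
        rcases (hmemA' θ p).1 hp with hpM | ⟨hθ, rfl⟩
        · exact (mem_ballSet.1 (hMdec θ θ' hθθ' hyJ)).2 p hpM
        · by_cases h' : θ' ≤ θ₀
          · exact hy.2 (c, ρ) ((hmemA' θ' _).2 (Or.inr ⟨h', rfl⟩))
          · have hθ₀θ' : θ₀ ≤ θ' := le_of_not_ge h'
            exact Metric.mem_closedBall.1 (hJball (hMdec θ₀ θ' hθ₀θ' hyJ))
      · intro θ
        exact (hMbase θ).trans (hMA' θ)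
    have hA'eq : A' = M := hMmax.eq_of_ge hA'S (hMA')
    intro θ hθ y hy
    have hcM : (c, ρ) ∈ M θ := by
      rw [← hA'eq]
      exact (hmemA' θ _).2 (Or.inr ⟨hθ, rfl⟩)
    exact Metric.mem_closedBall.2 ((mem_ballSet.1 hy).2 (c, ρ) hcM)
  -- Step 2: each `J γ` has zero diameter
  have hJbdd : ∀ θ, IsBounded (J θ) := fun θ => (hbdd θ).subset (hJH θ)
  have hsingle : ∀ (γ : Θ), ∀ y ∈ J γ, ∀ z ∈ J γ, y = z := by
    intro γ
    set d : ℝ := Metric.diam (J γ) with hd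
    have hd0 : 0 ≤ d := Metric.diam_nonneg
    set A'' : Θ → Set (X × ℝ) := fun θ =>
      M θ ∪ (fun z => (z, d / 2)) '' J (max θ γ) with hA''
    have hMA'' : M ≤ A'' := fun θ p hp => Set.mem_union_left _ hp
    have hA''S : A'' ∈ S := by
      refine ⟨?_, ?_, ?_, fun θ => (hMbase θ).trans (hMA'' θ)⟩
      · rintro θ p (hp | ⟨z, hz, rfl⟩)
        · exact hMc θ p hp
        · exact hdec θ (max θ γ) (le_max_left θ γ) (hJH _ hz)
      · intro θ
        refine ballSet_nonempty (hhc θ) ?_ ?_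
        · rintro p (hp | ⟨z, hz, rfl⟩)
          · exact hMc θ p hp
          · exact hdec θ (max θ γ) (le_max_left θ γ) (hJH _ hz)
        · have hsubθ : J (max θ γ) ⊆ J θ := hMdec θ (max θ γ) (le_max_left θ γ)
          have hsubγ : J (max θ γ) ⊆ J γ := hMdec γ (max θ γ) (le_max_right θ γ)
          rintro p (hp | ⟨z, hz, rfl⟩) q (hq | ⟨w, hw, rfl⟩)
          · obtain ⟨u, hu⟩ := hMne θ
            have h1 := (mem_ballSet.1 hu).2 p hp
            have h2 := (mem_ballSet.1 hu).2 q hq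
            rw [dist_comm] at h1
            calc dist p.1 q.1 ≤ dist p.1 u + dist u q.1 := dist_triangle _ _ _
            _ ≤ p.2 + q.2 := by linarith
          · have := (mem_ballSet.1 (hsubθ hw)).2 p hp
            rw [dist_comm] at this
            simpa using by linarith
          · have := (mem_ballSet.1 (hsubθ hz)).2 q hq
            calc dist (z, d / 2).1 q.1 ≤ q.2 := this
            _ ≤ (z, d / 2).2 + q.2 := by simpa using by linarith
          · have := Metric.dist_le_diam_of_mem (hJbdd γ) (hsubγ hz) (hsubγ hw)
            simpa using by linarith [this]
      · intro θ θ' hθθ' y hy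
        rw [mem_ballSet] at hy ⊢
        have hyJ : y ∈ J θ' := mem_ballSet.2 ⟨hy.1, fun q hq => hy.2 q (hMA'' θ' hq)⟩
        refine ⟨hdec θ θ' hθθ' hy.1, ?_⟩
        rintro p (hp | ⟨z, hz, rfl⟩)
        · exact (mem_ballSet.1 (hMdec θ θ' hθθ' hyJ)).2 p hp
        · by_cases hγθ' : γ ≤ θ'
          · have hmax' : max θ' γ = θ' := max_eq_left hγθ'
            have hJ'ball : J θ' ⊆ Metric.closedBall y (d / 2) := by
              intro w hw
              have hw' : (w, d / 2) ∈ A'' θ' := by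
                refine Set.mem_union_right _ ⟨w, ?_, rfl⟩
                rw [hmax']; exact hw
              have := hy.2 (w, d / 2) hw'
              rw [Metric.mem_closedBall, dist_comm]
              exact this
            have hkey := fact1 θ' y (d / 2) (hJH θ' hyJ) hJ'ball (max θ γ)
              (max_le hθθ' hγθ')
            have := hkey hz
            rw [Metric.mem_closedBall] at this
            rw [dist_comm] at this
            simpa using this
          · have hθ'γ : θ' ≤ γ := le_of_not_ge hγθ'
            have hmax1 : max θ γ = γ := max_eq_right (hθθ'.trans hθ'γ)
            have hmax2 : max θ' γ = γ := max_eq_right hθ'γ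
            have hw' : (z, d / 2) ∈ A'' θ' := by
              refine Set.mem_union_right _ ⟨z, ?_, rfl⟩
              rw [hmax2]; rw [hmax1] at hz; exact hz
            exact hy.2 (z, d / 2) hw'
    have hA''eq : A'' = M := hMmax.eq_of_ge hA''S hMA''
    have hball : ∀ z ∈ J γ, ∀ y ∈ J γ, dist y z ≤ d / 2 := by
      intro z hz y hy
      have hzM : (z, d / 2) ∈ M γ := by
        rw [← hA''eq]
        refine Set.mem_union_right _ ⟨z, ?_, rfl⟩
        rw [max_self]; exact hz
      exact (mem_ballSet.1 hy).2 (z, d / 2) hzM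
    have hdle : d ≤ d / 2 := by
      rw [hd]
      exact Metric.diam_le_of_forall_dist_le (by linarith)
        (fun y hy z hz => hball z hz y hy)
    have hdzero : d = 0 := by linarith
    intro y hy z hz
    have := Metric.dist_le_diam_of_mem (hJbdd γ) hy hz
    rw [← hd, hdzero] at this
    exact dist_le_zero.1 this
  -- conclude
  set θ₁ : Θ := Classical.arbitrary Θ with hθ₁
  obtain ⟨p, hp⟩ := hMne θ₁
  have hpJ : ∀ θ, p ∈ J θ := by
    intro θ
    rcases le_total θ θ₁ with h | h
    · exact hMdec θ θ₁ h hp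
    · obtain ⟨q, hq⟩ := hMne θ
      have hqθ₁ : q ∈ J θ₁ := hMdec θ₁ θ h hq
      have : p = q := hsingle θ₁ p hp q hqθ₁
      rw [this]; exact hq
  refine ⟨p, fun θ => hJH θ (hpJ θ), fun γ => ?_⟩
  exact (mem_ballSet.1 hp).2 (x γ, r γ) (hMbase θ₁ ⟨γ, rfl⟩)

end BaillonAux

/-- Baillon's theorem: if `Θ` is a (non-empty) totally ordered set and `(H θ)` is a
decreasing family of non-empty bounded hyperconvex subsets of a metric space `X`, then
the intersection `⋂ θ, H θ` is hyperconvex (in particular, non-empty). -/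
theorem hyperconvex_iInter_of_decreasing {X : Type u} [MetricSpace X]
    {Θ : Type v} [LinearOrder Θ] [Nonempty Θ] (H : Θ → Set X)
    (hne : ∀ θ, (H θ).Nonempty)
    (hbdd : ∀ θ, Bornology.IsBounded (H θ))
    (hhc : ∀ θ, Hyperconvex (H θ))
    (hdec : ∀ θ θ', θ ≤ θ' → H θ' ⊆ H θ) :
    Hyperconvex (↥(⋂ θ, H θ)) := by
  constructor
  · obtain ⟨p, hp, -⟩ := BaillonAux.master H hbdd hhc hdec
      (Γ := PEmpty.{u + 1}) PEmpty.elim PEmpty.elim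
      (fun γ => γ.elim) (fun β => β.elim)
    exact ⟨⟨p, Set.mem_iInter.2 hp⟩⟩
  · intro Γ x r hr
    obtain ⟨p, hp, hpb⟩ := BaillonAux.master H hbdd hhc hdec
      (fun γ => (x γ : X)) r
      (fun γ θ => Set.mem_iInter.1 (x γ).2 θ)
      (fun β γ => by simpa [Subtype.dist_eq] using hr β γ)
    refine ⟨⟨p, Set.mem_iInter.2 hp⟩, Set.mem_iInter.2 fun γ => ?_⟩
    rw [Metric.mem_closedBall, Subtype.dist_eq]
    exact hpb γ
end

section
/- Let I be a set, F ⊆ I a finite subset, and for each i ∈ F let r̲_i, r̄_i : l_∞(I∖{i}) → ℝ be 1-Lipschitz functions with r̲_i(y) ≤ r̄_i(y) for all y. If Q := { x ∈ l_∞(I) : r̲_i(π̂_i(x)) ≤ x_i ≤ r̄_i(π̂_i(x)) for all i ∈ F } is non-empty, then Q (with the induced metric) is an injective metric space. -/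
universe u v w

set_option maxHeartbeats 1000000
set_option synthInstance.maxHeartbeats 400000

/-- A metric space `X` is injective if for every pair of metric spaces `A`, `B`, every
isometric embedding `ι : A → B` and every `1`-Lipschitz map `f : A → X`, there is a
`1`-Lipschitz map `g : B → X` with `g ∘ ι = f`. -/
def IsInjectiveMetricSpace (X : Type u) [MetricSpace X] : Prop :=
  ∀ ⦃A : Type v⦄ ⦃B : Type w⦄ [MetricSpace A] [MetricSpace B],
    ∀ ι : A → B, Isometry ι → ∀ f : A → X, LipschitzWith 1 f →
      ∃ g : B → X, LipschitzWith 1 g ∧ ∀ a, g (ι a) = f a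

/-- The map `l_∞(I) → l_∞(I \ {i})` dropping the `i`-th coordinate. -/
noncomputable def dropCoord {I : Type u} (i : I) (x : lp (fun _ : I => ℝ) ⊤) :
    lp (fun _ : {j : I // j ≠ i} => ℝ) ⊤ :=
  ⟨fun j => x j.1, memℓp_infty ⟨‖x‖, by
    rintro s ⟨j, rfl⟩
    exact lp.norm_apply_le_norm ENNReal.top_ne_zero x j.1⟩⟩

lemma dist_coord_le {I : Type u} (x y : lp (fun _ : I => ℝ) ⊤) (i : I) :
    |x i - y i| ≤ dist x y := by
  rw [dist_eq_norm]
  have := lp.norm_apply_le_norm ENNReal.top_ne_zero (x - y) i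
  simpa [lp.coeFn_sub, Real.norm_eq_abs] using this

lemma dist_dropCoord_le {I : Type u} (i : I) (x y : lp (fun _ : I => ℝ) ⊤) :
    dist (dropCoord i x) (dropCoord i y) ≤ dist x y := by
  rw [dist_eq_norm]
  refine lp.norm_le_of_forall_le dist_nonneg fun j => ?_
  have h1 : (dropCoord i x - dropCoord i y) j = x j.1 - y j.1 := by
    rw [lp.coeFn_sub]; rfl
  rw [h1, Real.norm_eq_abs]
  exact dist_coord_le x y j.1

lemma clamp_lip (lo hi lo' hi' t t' : ℝ) :
    |max lo (min t hi) - max lo' (min t' hi')| ≤ max |lo - lo'| (max |t - t'| |hi - hi'|) :=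
  (abs_max_sub_max_le_max _ _ _ _).trans
    (max_le_max le_rfl (abs_min_sub_min_le_max _ _ _ _))

lemma exists_fixedPt_of_nonexpansive {E : Type*} [NormedAddCommGroup E] [NormedSpace ℝ E]
    {K : Set E} (hKc : IsCompact K) (hKconv : Convex ℝ K) (hne : K.Nonempty)
    {f : E → E} (hflip : ∀ x y, dist (f x) (f y) ≤ dist x y)
    (hmaps : Set.MapsTo f K K) : ∃ x ∈ K, f x = x := by
  obtain ⟨c0, hc0⟩ := hne
  have hfc : Continuous f :=
    (LipschitzWith.of_dist_le_mul (K := 1) (by simpa using hflip)).continuous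
  obtain ⟨x0, hx0K, hx0min⟩ := hKc.exists_isMinOn ⟨c0, hc0⟩
    ((continuous_id.dist hfc).continuousOn)
  obtain ⟨C, hC⟩ := Metric.isBounded_iff.1 hKc.isBounded
  have hC0 : 0 ≤ C := by simpa using hC hc0 hc0
  refine ⟨x0, hx0K, ?_⟩
  have key : ∀ ε : ℝ, 0 < ε → dist x0 (f x0) ≤ ε := by
    intro ε hε
    set δ : ℝ := min 1 (ε / (C + 1)) with hδdef
    have hδ0 : 0 < δ := lt_min one_pos (by positivity)
    have hδ1 : δ ≤ 1 := min_le_left _ _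
    set g : E → E := fun x => (1 - δ) • f x + δ • c0 with hgdef
    have hgmaps : Set.MapsTo g K K := fun x hx =>
      hKconv (hmaps hx) hc0 (by linarith) hδ0.le (by ring)
    have hgdist : ∀ x y, dist (g x) (g y) ≤ (1 - δ) * dist x y := by
      intro x y
      calc dist (g x) (g y) = dist ((1 - δ) • f x) ((1 - δ) • f y) := dist_add_right _ _ _
        _ = |1 - δ| * dist (f x) (f y) := by rw [dist_smul₀, Real.norm_eq_abs]
        _ ≤ (1 - δ) * dist x y := by
            rw [abs_of_nonneg (by linarith)]
            exact mul_le_mul_of_nonneg_left (hflip x y) (by linarith)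
    set c : NNReal := ⟨1 - δ, by linarith⟩ with hcdef
    have hc1 : c < 1 := by rw [← NNReal.coe_lt_coe]; show (1 : ℝ) - δ < 1; linarith
    have hcontr : ContractingWith c (hgmaps.restrict g K K) := by
      refine ⟨hc1, LipschitzWith.of_dist_le_mul fun x y => ?_⟩
      rw [Subtype.dist_eq, Subtype.dist_eq]
      exact hgdist x.1 y.1
    obtain ⟨y, hyK, hyfix, -, -⟩ := hcontr.exists_fixedPoint' hKc.isComplete hgmaps hc0
      (edist_ne_top _ _)
    have hmin := isMinOn_iff.1 hx0min y hyK
    have hsplit : f y = (1 - δ) • f y + δ • f y := by module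
    have hdy : dist y (f y) ≤ δ * C := by
      calc dist y (f y) = dist (g y) (f y) := (congrArg (fun t => dist t (f y)) hyfix).symm
        _ = dist ((1 - δ) • f y + δ • c0) ((1 - δ) • f y + δ • f y) := by
            simp only [hgdef]; rw [← hsplit]
        _ = dist (δ • c0) (δ • f y) := dist_add_left _ _ _
        _ = δ * dist c0 (f y) := by rw [dist_smul₀, Real.norm_eq_abs, abs_of_pos hδ0]
        _ ≤ δ * C := mul_le_mul_of_nonneg_left (hC hc0 (hmaps hyK)) hδ0.le
    have hδC : δ * C ≤ ε := by
      have h1 : δ ≤ ε / (C + 1) := min_le_right _ _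
      have h2 : ε / (C + 1) * C ≤ ε := by
        rw [div_mul_eq_mul_div, div_le_iff₀ (by linarith)]
        nlinarith
      calc δ * C ≤ ε / (C + 1) * C := mul_le_mul_of_nonneg_right h1 hC0
        _ ≤ ε := h2
    exact hmin.trans (hdy.trans hδC)
  have hz : dist x0 (f x0) ≤ 0 := le_of_forall_pos_le_add (by simpa using key)
  exact (dist_le_zero.1 hz).symm

lemma hyperconvexQ {I : Type u} (F : Finset I)
    (rlo rhi : (i : I) → (lp (fun _ : {j : I // j ≠ i} => ℝ) ⊤ → ℝ))
    (hlo : ∀ i ∈ F, LipschitzWith 1 (rlo i))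
    (hhi : ∀ i ∈ F, LipschitzWith 1 (rhi i))
    (hle : ∀ i ∈ F, ∀ y, rlo i y ≤ rhi i y)
    (Q : Set (lp (fun _ : I => ℝ) ⊤))
    (hQdef : Q = {x | ∀ i ∈ F,
      rlo i (dropCoord i x) ≤ x i ∧ x i ≤ rhi i (dropCoord i x)})
    (hQ : Q.Nonempty)
    {Λ : Type*} (y : Λ → lp (fun _ : I => ℝ) ⊤) (hy : ∀ l, y l ∈ Q) (r : Λ → ℝ)
    (hpair : ∀ l m, dist (y l) (y m) ≤ r l + r m) :
    ∃ z ∈ Q, ∀ l, dist z (y l) ≤ r l := by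
  classical
  subst hQdef
  rcases isEmpty_or_nonempty Λ with hΛ | hΛ
  · obtain ⟨q, hq⟩ := hQ
    exact ⟨q, hq, fun l => (hΛ.false l).elim⟩
  have l0 : Λ := Classical.arbitrary Λ
  have hr : ∀ l, 0 ≤ r l := fun l => by
    have h1 := hpair l l
    have h2 : (0:ℝ) ≤ dist (y l) (y l) := dist_nonneg
    linarith
  have hcoord : ∀ l m (i : I), |y l i - y m i| ≤ r l + r m := fun l m i =>
    (dist_coord_le _ _ i).trans (hpair l m)
  set A : I → ℝ := fun i => ⨆ l, (y l i - r l) with hAdef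
  set B : I → ℝ := fun i => ⨅ l, (y l i + r l) with hBdef
  have bddA : ∀ i, BddAbove (Set.range fun l => y l i - r l) := by
    intro i
    refine ⟨y l0 i + r l0, ?_⟩
    rintro _ ⟨l, rfl⟩
    show y l i - r l ≤ _
    have h := abs_le.1 (hcoord l l0 i)
    linarith [h.2]
  have bddB : ∀ i, BddBelow (Set.range fun l => y l i + r l) := by
    intro i
    refine ⟨y l0 i - r l0, ?_⟩
    rintro _ ⟨l, rfl⟩
    show _ ≤ y l i + r l
    have h := abs_le.1 (hcoord l0 l i)
    linarith [h.2]
  have hA_ge : ∀ (i : I) (l : Λ), y l i - r l ≤ A i := fun i l => le_ciSup (bddA i) l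
  have hA_le : ∀ (i : I) (l : Λ), A i ≤ y l i + r l := fun i l =>
    ciSup_le fun m => by have h := abs_le.1 (hcoord m l i); linarith [h.2]
  have hB_ge : ∀ (i : I) (l : Λ), y l i - r l ≤ B i := fun i l =>
    le_ciInf fun m => by have h := abs_le.1 (hcoord l m i); linarith [h.2]
  have hB_le : ∀ (i : I) (l : Λ), B i ≤ y l i + r l := fun i l => ciInf_le (bddB i) l
  have hAB : ∀ i, A i ≤ B i := fun i =>
    ciSup_le fun l => le_ciInf fun m => by have h := abs_le.1 (hcoord l m i); linarith [h.2]
  have hAbnd : ∀ j, |A j| ≤ ‖y l0‖ + r l0 := by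
    intro j
    have h1 := hA_ge j l0
    have h2 := hA_le j l0
    have h3 : |y l0 j| ≤ ‖y l0‖ := by
      have := lp.norm_apply_le_norm ENNReal.top_ne_zero (y l0) j
      simpa [Real.norm_eq_abs] using this
    have h4 := abs_le.1 h3
    rw [abs_le]
    constructor <;> linarith [h4.1, h4.2, hr l0]
  set embF : ({i // i ∈ F} → ℝ) → (I → ℝ) :=
    fun u j => if h : j ∈ F then u ⟨j, h⟩ else A j with hembF
  have hmem : ∀ u, Memℓp (embF u) ⊤ := by
    intro u
    apply memℓp_infty
    obtain ⟨M, hM⟩ := Finite.exists_le fun i : {i // i ∈ F} => |u i|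
    refine ⟨max M (‖y l0‖ + r l0), ?_⟩
    rintro _ ⟨j, rfl⟩
    show ‖embF u j‖ ≤ _
    rw [Real.norm_eq_abs]
    by_cases h : j ∈ F
    · simp only [hembF, dif_pos h]
      exact (hM ⟨j, h⟩).trans (le_max_left _ _)
    · simp only [hembF, dif_neg h]
      exact (hAbnd j).trans (le_max_right _ _)
  set mkE : ({i // i ∈ F} → ℝ) → lp (fun _ : I => ℝ) ⊤ := fun u => ⟨embF u, hmem u⟩ with hmkE
  have hmkE_apply : ∀ u j, mkE u j = embF u j := fun u j => rfl
  have hmkE_dist : ∀ u u', dist (mkE u) (mkE u') ≤ dist u u' := by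
    intro u u'
    rw [dist_eq_norm]
    refine lp.norm_le_of_forall_le dist_nonneg fun j => ?_
    have h1 : (mkE u - mkE u') j = embF u j - embF u' j := by rw [lp.coeFn_sub]; rfl
    rw [h1, Real.norm_eq_abs]
    by_cases h : j ∈ F
    · simp only [hembF, dif_pos h]
      have := dist_le_pi_dist u u' ⟨j, h⟩
      rwa [Real.dist_eq] at this
    · simp only [hembF, dif_neg h, sub_self, abs_zero]
      exact dist_nonneg
  set Θ : ({i // i ∈ F} → ℝ) → ({i // i ∈ F} → ℝ) := fun u i =>
    max (A i.1) (min (max (rlo i.1 (dropCoord i.1 (mkE u)))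
      (min (u i) (rhi i.1 (dropCoord i.1 (mkE u))))) (B i.1)) with hΘ
  have hΘlip : ∀ u u', dist (Θ u) (Θ u') ≤ dist u u' := by
    intro u u'
    refine (dist_pi_le_iff dist_nonneg).2 fun i => ?_
    rw [Real.dist_eq]
    have hd : dist (mkE u) (mkE u') ≤ dist u u' := hmkE_dist u u'
    have hdd : dist (dropCoord i.1 (mkE u)) (dropCoord i.1 (mkE u')) ≤ dist u u' :=
      (dist_dropCoord_le _ _ _).trans hd
    have hlo' : |rlo i.1 (dropCoord i.1 (mkE u)) - rlo i.1 (dropCoord i.1 (mkE u'))|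
        ≤ dist u u' := by
      have h := (hlo i.1 i.2).dist_le_mul (dropCoord i.1 (mkE u)) (dropCoord i.1 (mkE u'))
      rw [Real.dist_eq] at h
      simp only [NNReal.coe_one, one_mul] at h
      exact h.trans hdd
    have hhi' : |rhi i.1 (dropCoord i.1 (mkE u)) - rhi i.1 (dropCoord i.1 (mkE u'))|
        ≤ dist u u' := by
      have h := (hhi i.1 i.2).dist_le_mul (dropCoord i.1 (mkE u)) (dropCoord i.1 (mkE u'))
      rw [Real.dist_eq] at h
      simp only [NNReal.coe_one, one_mul] at h
      exact h.trans hdd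
    have hu : |u i - u' i| ≤ dist u u' := by
      have := dist_le_pi_dist u u' i
      rwa [Real.dist_eq] at this
    simp only [hΘ]
    refine (clamp_lip _ _ _ _ _ _).trans ?_
    rw [sub_self, abs_zero, sub_self, abs_zero]
    refine max_le dist_nonneg (max_le ((clamp_lip _ _ _ _ _ _).trans ?_) dist_nonneg)
    exact max_le hlo' (max_le hu hhi')
  have hfixex : ∃ u ∈ (Set.pi Set.univ fun i : {i // i ∈ F} => Set.Icc (A i.1) (B i.1)),
      Θ u = u := by
    refine exists_fixedPt_of_nonexpansive ?_ ?_ ?_ hΘlip ?_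
    · exact isCompact_univ_pi fun i => isCompact_Icc
    · exact convex_pi fun i _ => convex_Icc _ _
    · exact ⟨fun i => A i.1, fun i _ => ⟨le_rfl, hAB i.1⟩⟩
    · intro u _ i _
      simp only [hΘ]
      exact ⟨le_max_left _ _, max_le (hAB i.1) (min_le_right _ _)⟩
  obtain ⟨ustar, huK, hufix⟩ := hfixex
  set z : lp (fun _ : I => ℝ) ⊤ := mkE ustar with hzdef
  have hzbox : ∀ j, A j ≤ z j ∧ z j ≤ B j := by
    intro j
    by_cases h : j ∈ F
    · have h1 : z j = ustar ⟨j, h⟩ := by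
        rw [hzdef, hmkE_apply]
        simp only [hembF, dif_pos h]
      rw [h1]
      exact ⟨(huK ⟨j, h⟩ (Set.mem_univ _)).1, (huK ⟨j, h⟩ (Set.mem_univ _)).2⟩
    · have h1 : z j = A j := by
        rw [hzdef, hmkE_apply]
        simp only [hembF, dif_neg h]
      rw [h1]
      exact ⟨le_rfl, hAB j⟩
  have hznear : ∀ l, dist z (y l) ≤ r l := by
    intro l
    rw [dist_eq_norm]
    refine lp.norm_le_of_forall_le (hr l) fun j => ?_
    have h1 : (z - y l) j = z j - y l j := by rw [lp.coeFn_sub]; rfl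
    rw [h1, Real.norm_eq_abs, abs_le]
    have h2 := hzbox j
    have h3 := hA_ge j l
    have h4 := hB_le j l
    exact ⟨by linarith [h2.1], by linarith [h2.2]⟩
  refine ⟨z, ?_, hznear⟩
  intro i hiF
  set lo := rlo i (dropCoord i z) with hlodef
  set hi' := rhi i (dropCoord i z) with hhidef
  have hlohi : lo ≤ hi' := hle i hiF _
  have hdrops : ∀ l, dist (dropCoord i z) (dropCoord i (y l)) ≤ r l := fun l =>
    (dist_dropCoord_le _ _ _).trans (hznear l)
  have hloB : lo ≤ B i := by
    refine le_ciInf fun l => ?_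
    have h1 : |lo - rlo i (dropCoord i (y l))| ≤ r l := by
      have h := (hlo i hiF).dist_le_mul (dropCoord i z) (dropCoord i (y l))
      rw [Real.dist_eq] at h
      simp only [NNReal.coe_one, one_mul] at h
      exact h.trans (hdrops l)
    have h2 := (hy l i hiF).1
    have h3 := abs_le.1 h1
    linarith [h3.1]
  have hAhi : A i ≤ hi' := by
    refine ciSup_le fun l => ?_
    have h1 : |hi' - rhi i (dropCoord i (y l))| ≤ r l := by
      have h := (hhi i hiF).dist_le_mul (dropCoord i z) (dropCoord i (y l))
      rw [Real.dist_eq] at h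
      simp only [NNReal.coe_one, one_mul] at h
      exact h.trans (hdrops l)
    have h2 := (hy l i hiF).2
    have h3 := abs_le.1 h1
    linarith [h3.1]
  have hzi : z i = ustar ⟨i, hiF⟩ := by
    rw [hzdef, hmkE_apply]
    simp only [hembF, dif_pos hiF]
  have hifix := congrFun hufix ⟨i, hiF⟩
  simp only [hΘ] at hifix
  rw [← hzdef, ← hlodef, ← hhidef] at hifix
  -- hifix : max (A i) (min (max lo (min (ustar ⟨i,hiF⟩) hi')) (B i)) = ustar ⟨i,hiF⟩
  set s := ustar ⟨i, hiF⟩ with hsdef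
  set w := max lo (min s hi') with hwdef
  have hw1 : lo ≤ w := le_max_left _ _
  have hw2 : w ≤ hi' := max_le hlohi (min_le_right _ _)
  constructor
  · calc lo ≤ min w (B i) := le_min hw1 hloB
      _ ≤ max (A i) (min w (B i)) := le_max_right _ _
      _ = s := hifix
      _ = z i := hzi.symm
  · calc z i = s := hzi
      _ = max (A i) (min w (B i)) := hifix.symm
      _ ≤ hi' := max_le hAhi ((min_le_left _ _).trans hw2)


/-- If `F ⊆ I` is finite and for `i ∈ F` the bounds `r̲_i, r̄_i : l_∞(I \ {i}) → ℝ` are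
`1`-Lipschitz with `r̲_i ≤ r̄_i`, then the set
`Q = {x : r̲_i(π̂_i x) ≤ x_i ≤ r̄_i(π̂_i x) for all i ∈ F}`, if non-empty, is an injective
metric space with the induced metric. -/
theorem injective_of_finitely_many_lipschitz_inequalities {I : Type u}
    (F : Finset I)
    (rlo rhi : (i : I) → (lp (fun _ : {j : I // j ≠ i} => ℝ) ⊤ → ℝ))
    (hlo : ∀ i ∈ F, LipschitzWith 1 (rlo i))
    (hhi : ∀ i ∈ F, LipschitzWith 1 (rhi i))
    (hle : ∀ i ∈ F, ∀ y, rlo i y ≤ rhi i y)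
    (Q : Set (lp (fun _ : I => ℝ) ⊤))
    (hQdef : Q = {x | ∀ i ∈ F,
      rlo i (dropCoord i x) ≤ x i ∧ x i ≤ rhi i (dropCoord i x)})
    (hQ : Q.Nonempty) :
    IsInjectiveMetricSpace.{u, v, w} Q := by
  intro A B _ _ ι hι f hf
  classical
  set S : Set (Set (B × Q)) := {Γ | (∀ a : A, (ι a, f a) ∈ Γ) ∧
    ∀ p ∈ Γ, ∀ q ∈ Γ, dist ((p.2 : Q) : lp (fun _ : I => ℝ) ⊤) ((q.2 : Q) : lp (fun _ : I => ℝ) ⊤)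
      ≤ dist p.1 q.1} with hS
  have hΓ0 : Set.range (fun a : A => (ι a, f a)) ∈ S := by
    constructor
    · exact fun a => ⟨a, rfl⟩
    · rintro _ ⟨a, rfl⟩ _ ⟨a', rfl⟩
      have h1 := hf.dist_le_mul a a'
      simp only [NNReal.coe_one, one_mul] at h1
      rw [Subtype.dist_eq] at h1
      simpa [hι.dist_eq] using h1
  have Hchain : ∀ c ⊆ S, IsChain (· ⊆ ·) c → c.Nonempty →
      ∃ ub ∈ S, ∀ s ∈ c, s ⊆ ub := by
    intro c hcS hchain hcne
    obtain ⟨Γ1, hΓ1⟩ := hcne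
    refine ⟨⋃₀ c, ⟨fun a => Set.mem_sUnion.2 ⟨Γ1, hΓ1, (hcS hΓ1).1 a⟩, ?_⟩,
      fun s hs => Set.subset_sUnion_of_mem hs⟩
    rintro p ⟨s1, hs1, hp⟩ q ⟨s2, hs2, hq⟩
    rcases hchain.total hs1 hs2 with h | h
    · exact (hcS hs2).2 p (h hp) q hq
    · exact (hcS hs1).2 p hp q (h hq)
  obtain ⟨Γ, hΓ0sub, hmax⟩ := zorn_subset_nonempty S Hchain _ hΓ0
  have hΓS := hmax.prop
  have htotal : ∀ b : B, ∃ q : Q, (b, q) ∈ Γ := by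
    intro b
    by_contra hb
    push_neg at hb
    have hpairΓ : ∀ p q : ↥Γ, dist ((p.1.2 : Q) : lp (fun _ : I => ℝ) ⊤)
        ((q.1.2 : Q) : lp (fun _ : I => ℝ) ⊤) ≤ dist b p.1.1 + dist b q.1.1 := by
      intro p q
      calc dist ((p.1.2 : Q) : lp (fun _ : I => ℝ) ⊤) ((q.1.2 : Q) : lp (fun _ : I => ℝ) ⊤)
          ≤ dist p.1.1 q.1.1 := hΓS.2 p.1 p.2 q.1 q.2
        _ ≤ dist p.1.1 b + dist b q.1.1 := dist_triangle _ _ _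
        _ = dist b p.1.1 + dist b q.1.1 := by rw [dist_comm b p.1.1]
    obtain ⟨z, hzQ, hz⟩ := hyperconvexQ F rlo rhi hlo hhi hle Q hQdef hQ (Λ := ↥Γ)
      (fun p => ((p.1.2 : Q) : lp (fun _ : I => ℝ) ⊤))
      (fun p => p.1.2.2) (fun p => dist b p.1.1) hpairΓ
    have hΓ'S : insert (b, (⟨z, hzQ⟩ : Q)) Γ ∈ S := by
      constructor
      · exact fun a => Set.mem_insert_of_mem _ (hΓS.1 a)
      · rintro p (rfl | hp) q (rfl | hq)
        · simp
        · exact hz ⟨q, hq⟩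
        · rw [dist_comm, dist_comm p.1 b]
          exact hz ⟨p, hp⟩
        · exact hΓS.2 p hp q hq
    have hsub := hmax.2 hΓ'S (Set.subset_insert _ _)
    exact hb ⟨z, hzQ⟩ (hsub (Set.mem_insert _ _))
  choose g hg using htotal
  refine ⟨g, ?_, ?_⟩
  · refine LipschitzWith.of_dist_le_mul fun b b' => ?_
    rw [Subtype.dist_eq, NNReal.coe_one, one_mul]
    exact hΓS.2 _ (hg b) _ (hg b')
  · intro a
    have h1 := hΓS.2 _ (hg (ι a)) _ (hΓS.1 a)
    simp only [dist_self] at h1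
    have h2 : dist (g (ι a)) (f a) ≤ 0 := by rw [Subtype.dist_eq]; exact h1
    exact dist_le_zero.1 h2
end
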